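/- Let m be a positive integer with gcd(m,q) = 1, a an integer with gcd(a,m) = 1, and C = F_q[x]·c(x) a maximal 1-generator QC code of index l generated by c(x) = (c_1(x),...,c_l(x)) ∈ (F_q[x]/(x^m−1))^l, i.e. gcd(c_1(x),...,c_l(x), x^m−1) = 1. Let a' be the residue of −a modulo m. Then C is μ_a-LCD if and only if gcd(Σ_{j=1}^l c_j(x)·c_j(x^{a'}), x^m−1) = 1 (computing c_j(x^{a'}) modulo x^m−1). -/

import Mathlib

open scoped BigOperators
open Polynomial

/-- The Euclidean dual of a linear code inside `(F[x]/(x^m - 1))^l`, each factor being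
identified with `F^m` (coordinates indexed by `ZMod m`) via coefficient vectors. -/
def qcDual {F : Type*} [Field F] {l m : ℕ} [NeZero m]
    (C : Submodule F (Fin l → ZMod m → F)) : Submodule F (Fin l → ZMod m → F) where
  carrier := {b | ∀ c ∈ C, ∑ j, ∑ i, b j i * c j i = 0}
  zero_mem' := by intro c hc; simp
  add_mem' := by
    intro x y hx hy c hc
    simp only [Set.mem_setOf_eq, Pi.add_apply, add_mul, Finset.sum_add_distrib,
      hx c hc, hy c hc, add_zero]
  smul_mem' := by
    intro r x hx c hc
    simp only [Set.mem_setOf_eq, Pi.smul_apply, smul_eq_mul, mul_assoc,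
      ← Finset.mul_sum, hx c hc, mul_zero]

/-- The coordinate permutation `μ_a` of `(F[x]/(x^m - 1))^l`, sending each component
`c_j(x)` to `c_j(x^a) mod (x^m - 1)`; on coefficient vectors the coefficient of `x^i`
of the image of `c_j` is the coefficient of `x^(a⁻¹ i)` of `c_j`. -/
def muQC {F : Type*} [Field F] (l m : ℕ) (a : ℤ) :
    (Fin l → ZMod m → F) →ₗ[F] (Fin l → ZMod m → F) where
  toFun c := fun j i => c j (((a : ZMod m))⁻¹ * i)
  map_add' := fun _ _ => rfl
  map_smul' := fun _ _ => rfl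

/-- The coefficient vector (indexed by `ZMod m`) of a polynomial of degree `< m`,
identifying `F[x]/(x^m - 1)` with `F^m`. -/
def polyToVec {F : Type*} [Field F] (m : ℕ) [NeZero m] (p : Polynomial F) : ZMod m → F :=
  fun i => p.coeff i.val

/-- The 1-generator quasi-cyclic code of index `l` generated by
`c = (c_1(x), …, c_l(x)) ∈ (F[x]/(x^m - 1))^l`. -/
def oneGenQC {F : Type*} [Field F] (m l : ℕ) [NeZero m] (c : Fin l → Polynomial F) :
    Submodule F (Fin l → ZMod m → F) :=
  Submodule.span F
    {v | ∃ p : Polynomial F, v = fun j => polyToVec m ((p * c j) % (X ^ m - 1))}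


/-! Identify `F[x]/(x^m - 1)` with `F^m` through coefficient vectors. The Euclidean pairing of the
vector of `f` with the `μ_a`-image of the vector of `h` is the constant coefficient of
`f(x) h(x^{a'})` modulo `x^m - 1`. Hence the codeword `p·c` lies in `μ_a(C)^⊥` iff `x^m - 1`
divides `p·S`, where `S = ∑ c_j(x) c_j(x^{a'})`, and `C` is `μ_a`-LCD iff every such `p` also
kills every `c_j` modulo `x^m - 1`. Since `gcd(c_1, …, c_l, x^m - 1) = 1`, the multiplier
`p = (x^m - 1) / gcd(S, x^m - 1)` shows that this happens exactly when `gcd(S, x^m - 1) = 1`. -/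

section CoeffVecMod

variable {F : Type*} [Field F] {m : ℕ}

variable (F m) in
noncomputable def coeffVecMod : F[X] →ₗ[F] (ZMod m → F) where
  toFun p i := (p %ₘ (X ^ m - 1)).coeff i.val
  map_add' p q := by ext i; simp [add_modByMonic]
  map_smul' r p := by ext i; simp [smul_modByMonic]

lemma coeffVecMod_apply (p : F[X]) (i : ZMod m) :
    coeffVecMod F m p i = (p %ₘ (X ^ m - 1)).coeff i.val := rfl

variable [NeZero m]

lemma monic_X_pow_sub_one : (X ^ m - 1 : F[X]).Monic := by
  simpa using monic_X_pow_sub_C (1 : F) (NeZero.ne m)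

lemma degree_X_pow_sub_one : (X ^ m - 1 : F[X]).degree = m := by
  simpa using degree_X_pow_sub_C (NeZero.pos m) (1 : F)

lemma polyToVec_mod_eq_coeffVecMod (p : F[X]) :
    polyToVec m (p % (X ^ m - 1)) = coeffVecMod F m p := by
  ext i
  rw [polyToVec, coeffVecMod_apply, modByMonic_eq_mod _ monic_X_pow_sub_one]

lemma coeffVecMod_eq_zero_iff {p : F[X]} : coeffVecMod F m p = 0 ↔ X ^ m - 1 ∣ p := by
  rw [← modByMonic_eq_zero_iff_dvd monic_X_pow_sub_one]
  refine ⟨fun h => ext fun k => ?_, fun h => by ext i; simp [coeffVecMod_apply, h]⟩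
  rcases lt_or_ge k m with hk | hk
  · simpa [coeffVecMod_apply, ZMod.val_cast_of_lt hk] using congrFun h (k : ZMod m)
  · refine coeff_eq_zero_of_degree_lt ((degree_modByMonic_lt p monic_X_pow_sub_one).trans_le ?_)
    rw [degree_X_pow_sub_one]
    exact_mod_cast hk

lemma coeffVecMod_eq_of_dvd_sub {p q : F[X]} (h : X ^ m - 1 ∣ p - q) :
    coeffVecMod F m p = coeffVecMod F m q := by
  rwa [← sub_eq_zero, ← map_sub, coeffVecMod_eq_zero_iff]

lemma coeffVecMod_monomial (r : ℕ) (b : F) :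
    coeffVecMod F m (monomial r b) = Pi.single (r : ZMod m) b := by
  have hred : coeffVecMod F m (monomial r b) = coeffVecMod F m (monomial (r % m) b) := by
    apply coeffVecMod_eq_of_dvd_sub
    have : monomial r b - monomial (r % m) b = monomial (r % m) b * (X ^ (m * (r / m)) - 1) := by
      rw [mul_sub, mul_one, monomial_mul_X_pow, Nat.mod_add_div]
    rw [this]
    exact (pow_one_sub_dvd_pow_mul_sub_one X m (r / m)).mul_left _
  have hdeg : (monomial (r % m) b).degree < (X ^ m - 1 : F[X]).degree := by
    rw [degree_X_pow_sub_one]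
    exact (degree_monomial_le _ _).trans_lt (by exact_mod_cast Nat.mod_lt r (NeZero.pos m))
  ext i
  rw [hred, coeffVecMod_apply, (modByMonic_eq_self_iff monic_X_pow_sub_one).mpr hdeg,
    coeff_monomial, Pi.single_apply, ← ZMod.val_natCast]
  exact if_congr ((ZMod.val_injective m).eq_iff.trans eq_comm) rfl rfl

lemma coeffVecMod_mul_X_pow (p : F[X]) (s : ℕ) (i : ZMod m) :
    coeffVecMod F m (p * X ^ s) i = coeffVecMod F m p (i - s) := by
  induction p using Polynomial.induction_on' with
  | add f g hf hg => simp only [add_mul, map_add, Pi.add_apply, hf, hg]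
  | monomial n b =>
    simp only [monomial_mul_X_pow, coeffVecMod_monomial, Pi.single_apply, Nat.cast_add,
      sub_eq_iff_eq_add]

lemma coeffVecMod_mul_comp_X_pow_zero {A : ZMod m} {a' : ℕ} (ha' : (a' : ZMod m) = -A)
    (f h : F[X]) :
    coeffVecMod F m (f * h.comp (X ^ a')) 0 =
      ∑ i, coeffVecMod F m f (A * i) * coeffVecMod F m h i := by
  induction f using Polynomial.induction_on' with
  | add f₁ f₂ h₁ h₂ => simp only [add_mul, map_add, Pi.add_apply, Finset.sum_add_distrib, h₁, h₂]
  | monomial r b =>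
    induction h using Polynomial.induction_on' with
    | add h₁ h₂ ih₁ ih₂ =>
      simp only [add_comp, mul_add, map_add, Pi.add_apply, Finset.sum_add_distrib, ih₁, ih₂]
    | monomial t d =>
      have hprod :
          monomial r b * (monomial t d).comp (X ^ a') = monomial (r + a' * t) (b * d) := by
        simp only [← C_mul_X_pow_eq_monomial, mul_comp, C_comp, pow_comp, X_comp, ← pow_mul,
          map_mul]
        ring
      have hexp : (0 : ZMod m) = (r + a' * t : ℕ) ↔ A * t = r := by
        push_cast
        rw [ha']
        constructor <;> intro hx <;> linear_combination hx
      simp only [hprod, coeffVecMod_monomial, Pi.single_apply, mul_ite, ite_mul, zero_mul,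
        mul_zero, Finset.sum_ite_eq', Finset.mem_univ, if_true]
      exact if_congr hexp rfl rfl

lemma X_pow_sub_one_dvd_iff_forall_coeffVecMod_mul_comp {a' : ℕ} (ha' : IsUnit (a' : ZMod m))
    (f : F[X]) :
    X ^ m - 1 ∣ f ↔ ∀ q : F[X], coeffVecMod F m (f * q.comp (X ^ a')) 0 = 0 := by
  refine ⟨fun h q => congrFun (coeffVecMod_eq_zero_iff.mpr (h.mul_right _)) 0, fun h => ?_⟩
  rw [← coeffVecMod_eq_zero_iff]
  ext i
  -- `q = X ^ k` with `a' k ≡ -i` moves coordinate `i` to `0`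
  set k := ((a' : ZMod m)⁻¹ * -i).val
  have hk : ((a' * k : ℕ) : ZMod m) = -i := by
    rw [Nat.cast_mul, ZMod.natCast_val, ZMod.cast_id', id, ← mul_assoc,
      ZMod.mul_inv_of_unit _ ha', one_mul]
  simpa [pow_comp, ← pow_mul, coeffVecMod_mul_X_pow, hk] using h (X ^ k)

end CoeffVecMod

section QuasiCyclic

variable {F : Type*} [Field F] {l m : ℕ}

variable (m) in
noncomputable def qcEncoder (c : Fin l → F[X]) : F[X] →ₗ[F] (Fin l → ZMod m → F) :=
  LinearMap.pi fun j => coeffVecMod F m ∘ₗ LinearMap.mulRight F (c j)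

lemma qcEncoder_apply (c : Fin l → F[X]) (p : F[X]) (j : Fin l) :
    qcEncoder m c p j = coeffVecMod F m (p * c j) := rfl

variable [NeZero m]

lemma qcEncoder_eq_zero_iff {c : Fin l → F[X]} {p : F[X]} :
    qcEncoder m c p = 0 ↔ ∀ j, X ^ m - 1 ∣ p * c j := by
  simp only [funext_iff (f := qcEncoder m c p), qcEncoder_apply, Pi.zero_apply,
    coeffVecMod_eq_zero_iff]

lemma oneGenQC_eq_range (c : Fin l → F[X]) :
    oneGenQC m l c = LinearMap.range (qcEncoder m c) := by
  rw [oneGenQC, ← Submodule.span_eq (LinearMap.range (qcEncoder m c))]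
  congr 1
  ext v
  simp only [Set.mem_ofPred_eq, polyToVec_mod_eq_coeffVecMod, SetLike.mem_coe,
    LinearMap.mem_range, eq_comm (b := v)]
  rfl

lemma mem_oneGenQC {c : Fin l → F[X]} {v : Fin l → ZMod m → F} :
    v ∈ oneGenQC m l c ↔ ∃ p, qcEncoder m c p = v := by
  rw [oneGenQC_eq_range, LinearMap.mem_range]

lemma mem_qcDual_range {M : Type*} [AddCommMonoid M] [Module F M]
    (φ : M →ₗ[F] (Fin l → ZMod m → F)) (b : Fin l → ZMod m → F) :
    b ∈ qcDual (LinearMap.range φ) ↔ ∀ x, ∑ j, ∑ i, b j i * φ x j i = 0 :=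
  Set.forall_mem_range

lemma sum_qcEncoder_mul_muQC_qcEncoder {a : ℤ} {a' : ℕ} (ha : IsUnit (a : ZMod m))
    (ha' : (a' : ZMod m) = -a) (c : Fin l → F[X]) (p q : F[X]) :
    ∑ j, ∑ i, qcEncoder m c p j i * muQC l m a (qcEncoder m c q) j i =
      coeffVecMod F m (p * (∑ j, c j * (c j).comp (X ^ a')) * q.comp (X ^ a')) 0 := by
  have hreindex : ∀ u w : ZMod m → F,
      ∑ i, u i * w ((a : ZMod m)⁻¹ * i) = ∑ i, u (a * i) * w i := fun u w => by
    rw [← Equiv.sum_comp (Units.mulLeft ha.unit)]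
    simp [← mul_assoc, ZMod.inv_mul_of_unit _ ha]
  calc ∑ j, ∑ i, qcEncoder m c p j i * muQC l m a (qcEncoder m c q) j i
      = ∑ j, coeffVecMod F m (p * c j * (q * c j).comp (X ^ a')) 0 := by
        simp only [muQC, LinearMap.coe_mk, AddHom.coe_mk, hreindex, qcEncoder_apply,
          coeffVecMod_mul_comp_X_pow_zero ha']
    _ = coeffVecMod F m (∑ j, p * c j * (q * c j).comp (X ^ a')) 0 := by
        rw [map_sum, Finset.sum_apply]
    _ = coeffVecMod F m (p * (∑ j, c j * (c j).comp (X ^ a')) * q.comp (X ^ a')) 0 := by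
        rw [Finset.mul_sum, Finset.sum_mul]
        refine congrArg (coeffVecMod F m · 0) (Finset.sum_congr rfl fun j _ => ?_)
        rw [mul_comp]
        ring

lemma qcEncoder_mem_qcDual_map_muQC_iff {a : ℤ} {a' : ℕ} (ha : IsUnit (a : ZMod m))
    (ha' : (a' : ZMod m) = -a) (c : Fin l → F[X]) (p : F[X]) :
    qcEncoder m c p ∈ qcDual ((oneGenQC m l c).map (muQC l m a)) ↔
      X ^ m - 1 ∣ p * ∑ j, c j * (c j).comp (X ^ a') := by
  have ha'_unit : IsUnit (a' : ZMod m) := ha' ▸ ha.neg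
  rw [oneGenQC_eq_range, ← LinearMap.range_comp, mem_qcDual_range,
    X_pow_sub_one_dvd_iff_forall_coeffVecMod_mul_comp ha'_unit]
  simp only [LinearMap.comp_apply, sum_qcEncoder_mul_muQC_qcEncoder ha ha']

lemma oneGenQC_inf_qcDual_map_muQC_eq_bot_iff {a : ℤ} {a' : ℕ} (ha : IsUnit (a : ZMod m))
    (ha' : (a' : ZMod m) = -a) (c : Fin l → F[X]) :
    oneGenQC m l c ⊓ qcDual ((oneGenQC m l c).map (muQC l m a)) = ⊥ ↔
      ∀ p : F[X], X ^ m - 1 ∣ p * ∑ j, c j * (c j).comp (X ^ a') →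
        ∀ j, X ^ m - 1 ∣ p * c j := by
  simp only [Submodule.eq_bot_iff, Submodule.mem_inf, and_imp, mem_oneGenQC, forall_exists_index]
  rw [forall_comm]
  simp only [forall_eq', qcEncoder_mem_qcDual_map_muQC_iff ha ha', qcEncoder_eq_zero_iff]

end QuasiCyclic

lemma gcd_eq_one_iff_forall_dvd_mul_imp {α ι : Type*} [CommMonoidWithZero α]
    [NormalizedGCDMonoid α] [Fintype ι] {c : ι → α} {g x : α} (hg : g ≠ 0)
    (hc : gcd (Finset.univ.gcd c) g = 1) :
    gcd x g = 1 ↔ ∀ p, g ∣ p * x → ∀ j, g ∣ p * c j := by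
  refine ⟨fun h p hpx j => ?_, fun h => ?_⟩
  · have hgp : g ∣ gcd g x * p := dvd_gcd_mul_iff_dvd_mul.mpr (mul_comm p x ▸ hpx)
    rw [gcd_comm, h, one_mul] at hgp
    exact hgp.mul_right _
  · obtain ⟨e, he⟩ := gcd_dvd_right x g
    obtain ⟨x', hx'⟩ := gcd_dvd_left x g
    have he0 : e ≠ 0 := by rintro rfl; exact hg (by rw [he, mul_zero])
    have hdc : ∀ j, gcd x g ∣ c j := fun j => by
      refine (mul_dvd_mul_iff_left he0).mp ?_
      rw [mul_comm e, ← he]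
      exact h e ⟨x', by rw [he, mul_comm (gcd x g) e, mul_assoc, ← hx']⟩ j
    have hd1 : gcd x g ∣ 1 := hc ▸ dvd_gcd (Finset.dvd_gcd fun j _ => hdc j) (gcd_dvd_right x g)
    rw [← normalize_gcd, normalize_eq_one]
    exact isUnit_of_dvd_one hd1

theorem maximal_oneGen_qc_mu_lcd_iff_gcd_eq_one_general
    {F : Type*} [Field F] [DecidableEq F] {l m : ℕ} [NeZero m]
    (a : ℤ) (ha : Int.gcd a m = 1)
    (a' : ℕ) (ha' : (a' : ℤ) = (-a) % (m : ℤ))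
    (c : Fin l → Polynomial F)
    (hmax : gcd (Finset.univ.gcd c) (X ^ m - 1) = 1) :
    oneGenQC m l c ⊓ qcDual ((oneGenQC m l c).map (muQC l m a)) = ⊥ ↔
      gcd (∑ j, c j * ((c j).comp (X ^ a') % (X ^ m - 1))) (X ^ m - 1) = 1 := by
  have ha_unit : IsUnit (a : ZMod m) := IsUnit.of_mul_eq_one _
    (ZMod.coe_int_mul_inv_eq_one (Int.isCoprime_iff_gcd_eq_one.mpr ha))
  have ha'_neg : (a' : ZMod m) = -a := by
    simpa [ZMod.intCast_mod] using congrArg (Int.cast : ℤ → ZMod m) ha'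
  have hmod : X ^ m - 1 ∣ ∑ j, c j * ((c j).comp (X ^ a') % (X ^ m - 1)) -
      ∑ j, c j * (c j).comp (X ^ a') := by
    rw [← Finset.sum_sub_distrib]
    refine Finset.dvd_sum fun j _ => ?_
    rw [← mul_sub, EuclideanDomain.mod_eq_sub_mul_div, sub_sub_cancel_left]
    exact ((dvd_mul_right _ _).neg_right).mul_left _
  rw [oneGenQC_inf_qcDual_map_muQC_eq_bot_iff ha_unit ha'_neg, gcd_eq_of_dvd_sub_left hmod,
    gcd_eq_one_iff_forall_dvd_mul_imp (X_pow_sub_C_ne_zero (NeZero.pos m) 1) hmax]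

/-- Let `gcd(m,q) = 1`, `gcd(a,m) = 1`, `a'` the residue of `-a` mod `m`, and
`C = F_q[x]·c(x)` a maximal 1-generator QC code of index `l`, i.e.
`gcd(c_1(x), …, c_l(x), x^m - 1) = 1`.  Then `C` is `μ_a`-LCD iff
`gcd(∑ j, c_j(x) c_j(x^{a'}), x^m - 1) = 1` (computing `c_j(x^{a'})` mod `x^m - 1`). -/
theorem maximal_oneGen_qc_mu_lcd_iff_gcd_eq_one
    {F : Type*} [Field F] [Fintype F] [DecidableEq F] {l m : ℕ} [NeZero m]
    (hmq : Nat.Coprime m (Fintype.card F))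
    (a : ℤ) (ha : Int.gcd a m = 1)
    (a' : ℕ) (ha' : (a' : ℤ) = (-a) % (m : ℤ))
    (c : Fin l → Polynomial F)
    (hmax : gcd (Finset.univ.gcd c) (X ^ m - 1) = 1) :
    oneGenQC m l c ⊓ qcDual ((oneGenQC m l c).map (muQC l m a)) = ⊥ ↔
      gcd (∑ j, c j * ((c j).comp (X ^ a') % (X ^ m - 1))) (X ^ m - 1) = 1 :=
  maximal_oneGen_qc_mu_lcd_iff_gcd_eq_one_general a ha a' ha' c hmax
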